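/- Let E, Z be Banach spaces, K ⊆ Z a closed convex cone, X ⊆ E convex, f : X → ℝ convex, g : X → Z K-convex. If the optimal value of the dual problem sup{ inf_{x∈X}{ f(x)+⟨u*, g(x)⟩ } : u* ∈ K⁺ } is finite, then 0 belongs to the norm closure of the feasible set A := { z ∈ Z : ∃ x ∈ X, g(x) ⪯_K z }. -/

import Mathlib

/-!
Suppose `0 ∉ closure A`. The feasible set `A` is convex, so Hahn–Banach gives a continuous
functional `φ` and `b > 0` with `b < φ z` on `A`. Since `A + K ⊆ A`, a functional bounded below
on `A` is nonnegative on `K`, i.e. `φ ∈ K⁺`. If `u₀ ∈ K⁺` has a dual value above some real `m`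
(one exists because the dual optimum is not `⊥`), then `u₀ + t • φ ∈ K⁺` has dual value at
least `m + t b`, which tends to `∞` with `t`: the dual optimum would be `⊤`.
-/

open Set

section ConeOrder

variable {E Z : Type*} [AddCommGroup E] [Module ℝ E] [AddCommGroup Z] [Module ℝ Z] {K : Set Z}

theorem add_mem_of_convex_of_smul_mem (hKconv : Convex ℝ K)
    (hKcone : ∀ c : ℝ, 0 ≤ c → ∀ z ∈ K, c • z ∈ K) {a b : Z} (ha : a ∈ K) (hb : b ∈ K) :
    a + b ∈ K := by
  have hmid := hKconv ha hb (by norm_num : (0 : ℝ) ≤ 1 / 2) (by norm_num : (0 : ℝ) ≤ 1 / 2)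
    (by norm_num)
  have hdouble : (2 : ℝ) • ((1 / 2 : ℝ) • a + (1 / 2 : ℝ) • b) = a + b := by module
  simpa only [hdouble] using hKcone 2 zero_le_two _ hmid

theorem convex_setOf_exists_sub_mem (hKconv : Convex ℝ K)
    (hKcone : ∀ c : ℝ, 0 ≤ c → ∀ z ∈ K, c • z ∈ K) {X : Set E} (hX : Convex ℝ X) {g : E → Z}
    (hg : ∀ x₁ ∈ X, ∀ x₂ ∈ X, ∀ t ∈ Icc (0 : ℝ) 1,
      t • g x₁ + (1 - t) • g x₂ - g (t • x₁ + (1 - t) • x₂) ∈ K) :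
    Convex ℝ {z | ∃ x ∈ X, z - g x ∈ K} := by
  rintro z₁ ⟨x₁, hx₁, hk₁⟩ z₂ ⟨x₂, hx₂, hk₂⟩ a b ha hb hab
  obtain rfl : b = 1 - a := by linarith
  refine ⟨a • x₁ + (1 - a) • x₂, hX hx₁ hx₂ ha hb hab, ?_⟩
  have hsplit : a • z₁ + (1 - a) • z₂ - g (a • x₁ + (1 - a) • x₂) =
      a • (z₁ - g x₁) + (1 - a) • (z₂ - g x₂) +
        (a • g x₁ + (1 - a) • g x₂ - g (a • x₁ + (1 - a) • x₂)) := by module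
  rw [hsplit]
  exact add_mem_of_convex_of_smul_mem hKconv hKcone
    (add_mem_of_convex_of_smul_mem hKconv hKcone (hKcone a ha _ hk₁) (hKcone _ hb _ hk₂))
    (hg x₁ hx₁ x₂ hx₂ a ⟨ha, by linarith⟩)

theorem nonneg_on_cone_of_add_mem_of_lowerBound (hKcone : ∀ c : ℝ, 0 ≤ c → ∀ z ∈ K, c • z ∈ K)
    {A : Set Z} (hA : A.Nonempty) (hAK : ∀ a ∈ A, ∀ k ∈ K, a + k ∈ A) (φ : Z →ₗ[ℝ] ℝ) {b : ℝ}
    (hb : ∀ a ∈ A, b ≤ φ a) {k : Z} (hk : k ∈ K) : 0 ≤ φ k := by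
  by_contra! hneg
  obtain ⟨a, ha⟩ := hA
  have hba := hb a ha
  set t := (φ a - b + 1) / -φ k
  have ht : t * φ k = b - 1 - φ a := by
    rw [div_mul_eq_mul_div, div_eq_iff (neg_ne_zero.mpr hneg.ne)]
    ring
  have hmoved := hb _ (hAK a ha _ (hKcone t (div_nonneg (by linarith) (by linarith)) k hk))
  rw [map_add, map_smul, smul_eq_mul, ht] at hmoved
  linarith

end ConeOrder

section LagrangeDual

variable {E Z : Type*} [AddCommGroup Z] [Module ℝ Z] [TopologicalSpace Z]
  {X : Set E} {f : E → ℝ} {g : E → Z}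

noncomputable def lagrangeDual (X : Set E) (f : E → ℝ) (g : E → Z) (u : Z →L[ℝ] ℝ) : EReal :=
  sInf ((fun x => ((f x + u (g x) : ℝ) : EReal)) '' X)

theorem lagrangeDual_empty (f : E → ℝ) (g : E → Z) (u : Z →L[ℝ] ℝ) :
    lagrangeDual ∅ f g u = ⊤ := by
  simp [lagrangeDual]

theorem coe_add_mul_le_lagrangeDual_add_smul {u φ : Z →L[ℝ] ℝ} {m b t : ℝ}
    (hm : (m : EReal) ≤ lagrangeDual X f g u) (hb : ∀ x ∈ X, b ≤ φ (g x)) (ht : 0 ≤ t) :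
    ((m + t * b : ℝ) : EReal) ≤ lagrangeDual X f g (u + t • φ) := by
  refine le_sInf ?_
  rintro _ ⟨x, hx, rfl⟩
  have hmx : m ≤ f x + u (g x) :=
    EReal.coe_le_coe_iff.mp (hm.trans (sInf_le (mem_image_of_mem _ hx)))
  have hbx := mul_le_mul_of_nonneg_left (hb x hx) ht
  simp only [add_apply, smul_apply, smul_eq_mul,
    EReal.coe_le_coe_iff]
  linarith

theorem sSup_lagrangeDual_eq_top {P : Set (Z →L[ℝ] ℝ)} {φ : Z →L[ℝ] ℝ}
    (hP : ∀ u ∈ P, ∀ t : ℝ, 0 ≤ t → u + t • φ ∈ P) {b : ℝ} (hb0 : 0 < b)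
    (hb : ∀ x ∈ X, b ≤ φ (g x)) (hne : sSup (lagrangeDual X f g '' P) ≠ ⊥) :
    sSup (lagrangeDual X f g '' P) = ⊤ := by
  obtain ⟨u₀, hu₀, hu₀ne⟩ : ∃ u₀ ∈ P, lagrangeDual X f g u₀ ≠ ⊥ := by
    by_contra! hall
    exact hne (sSup_eq_bot.mpr (forall_mem_image.mpr hall))
  obtain ⟨m, -, hm⟩ := EReal.lt_iff_exists_real_btwn.mp (bot_lt_iff_ne_bot.mpr hu₀ne)
  rw [EReal.eq_top_iff_forall_lt]
  intro y
  set t := (|y - m| + 1) / b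
  have ht : t * b = |y - m| + 1 := div_mul_cancel₀ _ hb0.ne'
  calc (y : EReal) < ((m + t * b : ℝ) : EReal) := by
        rw [EReal.coe_lt_coe_iff, ht]
        linarith [le_abs_self (y - m)]
    _ ≤ lagrangeDual X f g (u₀ + t • φ) := coe_add_mul_le_lagrangeDual_add_smul hm.le hb (by positivity)
    _ ≤ sSup (lagrangeDual X f g '' P) :=
        le_sSup (mem_image_of_mem _ (hP u₀ hu₀ t (by positivity)))

end LagrangeDual

theorem stmt_12_general
    {E Z : Type*} [NormedAddCommGroup E] [NormedSpace ℝ E]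
    [NormedAddCommGroup Z] [NormedSpace ℝ Z]
    (K : Set Z) (hKconv : Convex ℝ K)
    (hKcone : ∀ c : ℝ, 0 ≤ c → ∀ z ∈ K, c • z ∈ K)
    (X : Set E) (hX : Convex ℝ X)
    (f : E → ℝ)
    (g : E → Z)
    (hg : ∀ x₁ ∈ X, ∀ x₂ ∈ X, ∀ t ∈ Set.Icc (0:ℝ) 1,
      t • g x₁ + (1 - t) • g x₂ - g (t • x₁ + (1 - t) • x₂) ∈ K)
    (Kplus : Set (Z →L[ℝ] ℝ)) (hKplus : Kplus = {u | ∀ z ∈ K, 0 ≤ u z})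
    -- the dual optimal value
    (dval : EReal)
    (hdval : dval =
      sSup ((fun u => sInf ((fun x => ((f x + u (g x) : ℝ) : EReal)) '' X)) '' Kplus))
    (hfin : dval ≠ ⊤ ∧ dval ≠ ⊥)
    (A : Set Z) (hA : A = {z | ∃ x ∈ X, z - g x ∈ K}) :
    (0:Z) ∈ closure A := by
  change dval = sSup (lagrangeDual X f g '' Kplus) at hdval
  subst hdval hA
  by_contra h0
  have hKplus_add : ∀ φ ∈ Kplus, ∀ u ∈ Kplus, ∀ t : ℝ, 0 ≤ t → u + t • φ ∈ Kplus := by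
    subst hKplus
    intro φ hφ u hu t ht z hz
    simpa using add_nonneg (hu z hz) (mul_nonneg ht (hφ z hz))
  rcases X.eq_empty_or_nonempty with rfl | ⟨x₀, hx₀⟩
  · have h0Kplus : (0 : Z →L[ℝ] ℝ) ∈ Kplus := by simp [hKplus]
    exact hfin.1 (by simp [lagrangeDual_empty, Nonempty.image_const ⟨_, h0Kplus⟩])
  have hK0 : (0 : Z) ∈ K := by simpa using hg x₀ hx₀ x₀ hx₀ 0 ⟨le_rfl, zero_le_one⟩
  have hgA : ∀ x ∈ X, g x ∈ {z | ∃ x ∈ X, z - g x ∈ K} := fun x hx => ⟨x, hx, by simpa using hK0⟩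
  obtain ⟨φ, b, hφ0, hφA⟩ := geometric_hahn_banach_point_closed
    (convex_setOf_exists_sub_mem hKconv hKcone hX hg).closure isClosed_closure h0
  have hφA' := fun z hz => hφA z (subset_closure hz)
  have hφK : φ ∈ Kplus := by
    rw [hKplus]
    refine fun k hk => nonneg_on_cone_of_add_mem_of_lowerBound hKcone ⟨_, hgA x₀ hx₀⟩ ?_
      φ.toLinearMap (fun z hz => (hφA' z hz).le) hk
    rintro z ⟨x, hx, hzx⟩ k hk
    exact ⟨x, hx, by simpa [add_sub_right_comm] using
      add_mem_of_convex_of_smul_mem hKconv hKcone hzx hk⟩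
  exact hfin.1 (sSup_lagrangeDual_eq_top (hKplus_add φ hφK) (by simpa using hφ0)
    (fun x hx => (hφA' _ (hgA x hx)).le) hfin.2)

/-- if the dual optimal value is finite, then `0` lies in the
norm closure of the feasible set `A`. -/
theorem stmt_12
    {E Z : Type*} [NormedAddCommGroup E] [NormedSpace ℝ E] [CompleteSpace E]
    [NormedAddCommGroup Z] [NormedSpace ℝ Z] [CompleteSpace Z]
    (K : Set Z) (hKclosed : IsClosed K) (hKconv : Convex ℝ K)
    (hKcone : ∀ c : ℝ, 0 ≤ c → ∀ z ∈ K, c • z ∈ K)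
    (X : Set E) (hX : Convex ℝ X)
    (f : E → ℝ) (hf : ConvexOn ℝ X f)
    (g : E → Z)
    (hg : ∀ x₁ ∈ X, ∀ x₂ ∈ X, ∀ t ∈ Set.Icc (0:ℝ) 1,
      t • g x₁ + (1 - t) • g x₂ - g (t • x₁ + (1 - t) • x₂) ∈ K)
    (Kplus : Set (Z →L[ℝ] ℝ)) (hKplus : Kplus = {u | ∀ z ∈ K, 0 ≤ u z})
    -- the dual optimal value
    (dval : EReal)
    (hdval : dval =
      sSup ((fun u => sInf ((fun x => ((f x + u (g x) : ℝ) : EReal)) '' X)) '' Kplus))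
    (hfin : dval ≠ ⊤ ∧ dval ≠ ⊥)
    (A : Set Z) (hA : A = {z | ∃ x ∈ X, z - g x ∈ K}) :
    (0:Z) ∈ closure A :=
  stmt_12_general K hKconv hKcone X hX f g hg Kplus hKplus dval hdval hfin A hA
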